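/- For the pentablock 𝒫 = { (a,s,p) ∈ ℂ³ : (s,p) ∈ 𝔾₂ and |a| < |1 − (½ s β̄)/(1 + √(1−|β|²))| }, where β = (s − s̄p)/(1−|p|²), the maps θ : 𝔾₂ → 𝒫, (s,p) ↦ (0,s,p), and ι : 𝒫 → 𝔾₂, (a,s,p) ↦ (s,p), are well-defined with ι ∘ θ = id; hence the symmetrized bidisc 𝔾₂ is an analytic retract of 𝒫. -/

import Mathlib

open Complex Metric

/-- The symmetrized bidisc `𝔾₂ = {(z+w, zw) : z, w ∈ 𝔻}`. -/
def SymBidisc : Set (ℂ × ℂ) :=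
  {x | ∃ z w : ℂ, ‖z‖ < 1 ∧ ‖w‖ < 1 ∧ x = (z + w, z * w)}

/-- The quantity `β(s,p) = (s - s̄ p)/(1 - |p|²)`. -/
noncomputable def pentaBeta (s p : ℂ) : ℂ :=
  (s - (starRingEnd ℂ) s * p) / ((1 : ℂ) - (‖p‖ ^ 2 : ℝ))

/-- The pentablock `𝒫`. -/
noncomputable def Pentablock : Set (ℂ × ℂ × ℂ) :=
  {x | (x.2.1, x.2.2) ∈ SymBidisc ∧
    ‖x.1‖ <
      ‖(1 - ((1 / 2 : ℂ) * x.2.1 * (starRingEnd ℂ) (pentaBeta x.2.1 x.2.2)) /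
        ((1 : ℂ) + (Real.sqrt (1 - ‖pentaBeta x.2.1 x.2.2‖ ^ 2) : ℝ)))‖}

/-!
`θ` lands in `𝒫` because the bound defining `𝒫` is positive on `𝔾₂`: for `s = z + w`, `p = z w`
one has `|β| ≤ 1` and `|s| < 2`, so the term `½ s β̄ / (1 + √(1 - |β|²))` has modulus `< 1`.
-/

open scoped ComplexConjugate

lemma one_sub_conj_mul_self (w : ℂ) : 1 - conj w * w = ((1 - ‖w‖ ^ 2 : ℝ) : ℂ) := by
  rw [mul_comm, mul_conj]
  push_cast [Complex.sq_norm]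
  ring

/-- Writing `a = ‖z‖`, `b = ‖w‖`, the gap is `(1 - a) (1 - b) (1 - a b) ≥ 0`. -/
lemma norm_add_sub_conj_mul_le {z w : ℂ} (hz : ‖z‖ ≤ 1) (hw : ‖w‖ ≤ 1) :
    ‖(z + w) - conj (z + w) * (z * w)‖ ≤ 1 - ‖z * w‖ ^ 2 := by
  have hsplit : (z + w) - conj (z + w) * (z * w)
      = z * (1 - conj w * w) + w * (1 - conj z * z) := by
    simp only [map_add]; ring
  have hnorm {u : ℂ} (hu : ‖u‖ ≤ 1) : ‖1 - conj u * u‖ = 1 - ‖u‖ ^ 2 := by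
    rw [one_sub_conj_mul_self, norm_real, Real.norm_eq_abs, abs_of_nonneg]
    nlinarith [norm_nonneg u]
  have hzw : ‖z‖ * ‖w‖ ≤ 1 := mul_le_one₀ hz (norm_nonneg w) hw
  calc ‖(z + w) - conj (z + w) * (z * w)‖
      ≤ ‖z‖ * (1 - ‖w‖ ^ 2) + ‖w‖ * (1 - ‖z‖ ^ 2) := by
        rw [hsplit, ← hnorm hw, ← hnorm hz, ← norm_mul, ← norm_mul]
        exact norm_add_le _ _
    _ ≤ 1 - ‖z * w‖ ^ 2 := by
        rw [norm_mul]
        nlinarith [mul_nonneg (mul_nonneg (sub_nonneg.2 hzw) (sub_nonneg.2 hz))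
          (sub_nonneg.2 hw)]

lemma norm_pentaBeta_le_one {s p : ℂ} (h : (s, p) ∈ SymBidisc) : ‖pentaBeta s p‖ ≤ 1 := by
  obtain ⟨z, w, hz, hw, hsp⟩ := h
  obtain ⟨rfl, rfl⟩ := Prod.mk.inj hsp
  have hden : 0 < 1 - ‖z * w‖ ^ 2 := by
    have : ‖z * w‖ < 1 := by
      rw [norm_mul]; exact mul_lt_one_of_nonneg_of_lt_one_left (norm_nonneg z) hz hw.le
    nlinarith [norm_nonneg (z * w)]
  rw [pentaBeta, ← ofReal_one, ← ofReal_sub, norm_div, norm_real, Real.norm_eq_abs,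
    abs_of_pos hden, div_le_one hden]
  exact norm_add_sub_conj_mul_le hz.le hw.le

lemma norm_fst_lt_two_of_mem_symBidisc {s p : ℂ} (h : (s, p) ∈ SymBidisc) : ‖s‖ < 2 := by
  obtain ⟨z, w, hz, hw, hsp⟩ := h
  obtain ⟨rfl, -⟩ := Prod.mk.inj hsp
  linarith [norm_add_le z w]

lemma norm_div_one_add_ofReal_le (a : ℂ) {r : ℝ} (hr : 0 ≤ r) : ‖a / (1 + (r : ℂ))‖ ≤ ‖a‖ := by
  have hden : ‖1 + (r : ℂ)‖ = 1 + r := by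
    rw [← ofReal_one, ← ofReal_add, norm_real, Real.norm_eq_abs, abs_of_nonneg (by linarith)]
  rw [norm_div, hden]
  exact div_le_self (norm_nonneg a) (by linarith)

lemma norm_half_mul_conj_div_lt_one {s β : ℂ} (hs : ‖s‖ < 2) (hβ : ‖β‖ ≤ 1) :
    ‖(1 / 2 : ℂ) * s * conj β / (1 + (Real.sqrt (1 - ‖β‖ ^ 2) : ℂ))‖ < 1 := by
  refine (norm_div_one_add_ofReal_le _ (Real.sqrt_nonneg _)).trans_lt ?_
  have hhalf : ‖(1 / 2 : ℂ)‖ = 1 / 2 := by norm_num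
  rw [norm_mul, norm_mul, norm_conj, hhalf]
  nlinarith [norm_nonneg s, norm_nonneg β]

lemma mk_zero_mem_pentablock {x : ℂ × ℂ} (hx : x ∈ SymBidisc) : (0, x.1, x.2) ∈ Pentablock := by
  refine ⟨hx, ?_⟩
  set q := (1 / 2 : ℂ) * x.1 * conj (pentaBeta x.1 x.2) /
    (1 + (Real.sqrt (1 - ‖pentaBeta x.1 x.2‖ ^ 2) : ℂ))
  have hq : ‖q‖ < 1 := norm_half_mul_conj_div_lt_one (norm_fst_lt_two_of_mem_symBidisc hx)
    (norm_pentaBeta_le_one hx)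
  calc ‖(0 : ℂ)‖ = 0 := norm_zero
    _ < 1 - ‖q‖ := sub_pos.2 hq
    _ ≤ ‖1 - q‖ := by simpa only [norm_one] using norm_sub_norm_le (1 : ℂ) q

/-- The symmetrized bidisc `𝔾₂` is an analytic retract of the pentablock `𝒫` via
`θ(s,p) = (0,s,p)` and `ι(a,s,p) = (s,p)`. -/
theorem symBidisc_analytic_retract_pentablock :
    ∃ (θ : ℂ × ℂ → ℂ × ℂ × ℂ) (ι : ℂ × ℂ × ℂ → ℂ × ℂ),
      (∀ x : ℂ × ℂ, θ x = (0, x.1, x.2)) ∧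
      (∀ y : ℂ × ℂ × ℂ, ι y = (y.2.1, y.2.2)) ∧
      Set.MapsTo θ SymBidisc Pentablock ∧
      Set.MapsTo ι Pentablock SymBidisc ∧
      DifferentiableOn ℂ θ SymBidisc ∧
      DifferentiableOn ℂ ι Pentablock ∧
      ∀ x ∈ SymBidisc, ι (θ x) = x := by
  refine ⟨fun x => (0, x.1, x.2), fun y => (y.2.1, y.2.2),
    fun _ => rfl, fun _ => rfl, fun _ => mk_zero_mem_pentablock, fun _ hy => hy.1, ?_, ?_,
    fun _ _ => rfl⟩
  · exact ((differentiable_const (0 : ℂ)).prodMk differentiable_id).differentiableOn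
  · exact differentiable_snd.differentiableOn
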